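/- arXiv:2411.17245 — 4 statements merged into one kernel-verified Lean document; each statement's English description precedes it below -/
import Mathlib

section
/- Every improving k-swap strictly decreases the potential: if there is an improving k-swap from σ to σ', then Φ(σ') < Φ(σ). -/
open Finset

/-- The load of machine `i` under schedule `σ` with processing times `p`. -/
noncomputable def load {n m : ℕ} (p : Fin n → ℝ) (σ : Fin n → Fin m) (i : Fin m) : ℝ :=
  ∑ j ∈ Finset.univ.filter (fun j => σ j = i), p j

/-- The makespan (maximum machine load) of schedule `σ`. -/
noncomputable def Lmax {n m : ℕ} (p : Fin n → ℝ) (σ : Fin n → Fin m) : ℝ :=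
  ⨆ i, load p σ i

/-- `δ_min`: the minimum of `|p(A) - p(B)|` over disjoint finsets of jobs `A`, `B`
with `1 ≤ |A| + |B| ≤ k`. -/
noncomputable def deltaMin (n k : ℕ) (p : Fin n → ℝ) : ℝ :=
  sInf { x | ∃ A B : Finset (Fin n), Disjoint A B ∧ 1 ≤ A.card + B.card ∧
    A.card + B.card ≤ k ∧ x = |∑ j ∈ A, p j - ∑ j ∈ B, p j| }

/-- An improving `k`-swap from `σ` to `σ'`, with critical machine `i`, machine `i' ≠ i`,
and disjoint job sets `A ⊆ σ⁻¹ {i}`, `B ⊆ σ⁻¹ {i'}` with `|A| ≥ 1`, `|A| + |B| ≤ k` and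
`0 < p(A) - p(B) < L_i(σ) - L_{i'}(σ)`; `σ'` sends `A` to `i'`, `B` to `i`, and agrees
with `σ` elsewhere. -/
def IsImprovingKSwap (k : ℕ) {n m : ℕ} (p : Fin n → ℝ) (σ σ' : Fin n → Fin m)
    (i i' : Fin m) (A B : Finset (Fin n)) : Prop :=
  load p σ i = Lmax p σ ∧
  i' ≠ i ∧
  Disjoint A B ∧
  (∀ j ∈ A, σ j = i) ∧ (∀ j ∈ B, σ j = i') ∧
  1 ≤ A.card ∧ A.card + B.card ≤ k ∧
  0 < (∑ j ∈ A, p j) - ∑ j ∈ B, p j ∧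
  (∑ j ∈ A, p j) - (∑ j ∈ B, p j) < load p σ i - load p σ i' ∧
  (∀ j ∈ A, σ' j = i') ∧ (∀ j ∈ B, σ' j = i) ∧
  ∀ j, j ∉ A → j ∉ B → σ' j = σ j

/-- The set `γ_s(σ)` of machines whose load is at most `L_max(σ) - δ_min`. -/
noncomputable def gammaS (k : ℕ) {n m : ℕ} (p : Fin n → ℝ) (σ : Fin n → Fin m) :
    Finset (Fin m) :=
  Finset.univ.filter (fun i => load p σ i ≤ Lmax p σ - deltaMin n k p)

/-- The potential `Φ(σ) = ∑_{(i,i')} |L_i(σ) - L_{i'}(σ)|` over ordered pairs of machines. -/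
noncomputable def potential {n m : ℕ} (p : Fin n → ℝ) (σ : Fin n → Fin m) : ℝ :=
  ∑ i : Fin m, ∑ i' : Fin m, |load p σ i - load p σ i'|
/-!
An improving swap moves the amount `d = p(A) - p(B)`, with `0 < d < L_i - L_{i'}`, from the
critical machine `i` to `i'` and leaves every other load unchanged. Pair each ordered pair of
machines with its image under the transposition `(i i')`. For a third machine of load `c`, the new
loads `L_i - d` and `L_{i'} + d` lie in `[L_{i'}, L_i]` and have the same sum as the old ones, so by
convexity of `|· - c|` the pair's contribution does not grow; the pair `(i, i')` itself strictly
improves, since `|L_i - L_{i'} - 2d| < L_i - L_{i'}`.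
-/

section Transfer
variable {ι : Type*} [DecidableEq ι] {f g : ι → ℝ} {i i' : ι} {d : ℝ}

lemma abs_sub_add_abs_sub_le_of_transfer {a b c d : ℝ} (hd : 0 ≤ d) (hdab : d ≤ a - b) :
    |a - d - c| + |b + d - c| ≤ |a - c| + |b - c| := by
  rcases abs_cases (a - c) with ⟨h1, _⟩ | ⟨h1, _⟩ <;>
  rcases abs_cases (b - c) with ⟨h2, _⟩ | ⟨h2, _⟩ <;>
  rcases abs_cases (a - d - c) with ⟨h3, _⟩ | ⟨h3, _⟩ <;>
  rcases abs_cases (b + d - c) with ⟨h4, _⟩ | ⟨h4, _⟩ <;>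
  linarith

lemma abs_sub_lt_of_transfer {a b d : ℝ} (hd : 0 < d) (hdab : d < a - b) :
    |a - d - (b + d)| < |a - b| := by
  rw [abs_of_pos (by linarith : 0 < a - b), abs_lt]
  constructor <;> linarith

lemma abs_sub_add_abs_sub_swap_le_of_transfer (hd : 0 ≤ d) (hdf : d ≤ f i - f i')
    (hgi : g i = f i - d) (hgi' : g i' = f i' + d) (hg : ∀ x, x ≠ i → x ≠ i' → g x = f x)
    (x y : ι) :
    |g x - g y| + |g (Equiv.swap i i' x) - g (Equiv.swap i i' y)| ≤
      |f x - f y| + |f (Equiv.swap i i' x) - f (Equiv.swap i i' y)| := by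
  -- each of the nine cases `x, y ∈ {i, i', other}` is `hx`, `hy` or `hpair` up to `abs_sub_comm`
  have hx := abs_sub_add_abs_sub_le_of_transfer (c := f x) hd hdf
  have hy := abs_sub_add_abs_sub_le_of_transfer (c := f y) hd hdf
  have hpair : |f i - d - (f i' + d)| ≤ |f i - f i'| := by
    rw [abs_of_nonneg (by linarith : 0 ≤ f i - f i'), abs_le]
    constructor <;> linarith
  have := abs_sub_comm (f i - d) (f i' + d)
  have := abs_sub_comm (f i) (f i')
  have := abs_sub_comm (f x) (f i - d)
  have := abs_sub_comm (f x) (f i' + d)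
  have := abs_sub_comm (f x) (f i)
  have := abs_sub_comm (f x) (f i')
  have trichotomy : ∀ z, z = i ∨ z = i' ∨ (z ≠ i ∧ z ≠ i') := by tauto
  rcases trichotomy x with rfl | rfl | ⟨hxi, hxi'⟩ <;>
  rcases trichotomy y with rfl | rfl | ⟨hyi, hyi'⟩ <;>
  simp (disch := assumption) only [Equiv.swap_apply_left, Equiv.swap_apply_right,
    Equiv.swap_apply_of_ne_of_ne, hgi, hgi', hg, sub_self, abs_zero] <;>
  linarith

omit [DecidableEq ι] in
lemma sum_sum_abs_sub_comp_equiv [Fintype ι] (e : ι ≃ ι) (h : ι → ℝ) :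
    ∑ x, ∑ y, |h (e x) - h (e y)| = ∑ x, ∑ y, |h x - h y| :=
  Fintype.sum_equiv e _ _ fun _ => Fintype.sum_equiv e _ _ fun _ => rfl

theorem sum_sum_abs_sub_lt_of_transfer [Fintype ι] (hd : 0 < d) (hdf : d < f i - f i')
    (hgi : g i = f i - d) (hgi' : g i' = f i' + d) (hg : ∀ x, x ≠ i → x ≠ i' → g x = f x) :
    ∑ x, ∑ y, |g x - g y| < ∑ x, ∑ y, |f x - f y| := by
  have hle := abs_sub_add_abs_sub_swap_le_of_transfer hd.le hdf.le hgi hgi' hg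
  have hlt : |g i - g i'| + |g (Equiv.swap i i' i) - g (Equiv.swap i i' i')| <
      |f i - f i'| + |f (Equiv.swap i i' i) - f (Equiv.swap i i' i')| := by
    rw [Equiv.swap_apply_left, Equiv.swap_apply_right, hgi, hgi', abs_sub_comm (f i' + d),
      abs_sub_comm (f i')]
    linarith [abs_sub_lt_of_transfer hd hdf]
  suffices ∑ x, ∑ y, (|g x - g y| + |g (Equiv.swap i i' x) - g (Equiv.swap i i' y)|) <
      ∑ x, ∑ y, (|f x - f y| + |f (Equiv.swap i i' x) - f (Equiv.swap i i' y)|) by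
    simp only [sum_add_distrib, sum_sum_abs_sub_comp_equiv] at this
    linarith
  exact sum_lt_sum (fun x _ => sum_le_sum fun y _ => hle x y)
    ⟨i, mem_univ _, sum_lt_sum (fun y _ => hle i y) ⟨i', mem_univ _, hlt⟩⟩

end Transfer

section Load
variable {n m : ℕ} (p : Fin n → ℝ)

lemma load_eq_sum_ite (σ : Fin n → Fin m) (c : Fin m) :
    load p σ c = ∑ j, if σ j = c then p j else 0 :=
  sum_filter _ _

lemma load_sub_load_eq_sum_of_eq_outside {σ σ' : Fin n → Fin m} {S : Finset (Fin n)}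
    (h : ∀ j, j ∉ S → σ' j = σ j) (c : Fin m) :
    load p σ' c - load p σ c =
      ∑ j ∈ S, ((if σ' j = c then p j else 0) - if σ j = c then p j else 0) := by
  rw [load_eq_sum_ite, load_eq_sum_ite, ← sum_sub_distrib]
  refine (sum_subset (subset_univ S) fun j _ hj => ?_).symm
  rw [h j hj, sub_self]

lemma sum_ite_sub_ite_of_const_on {σ σ' : Fin n → Fin m} {T : Finset (Fin n)} {a b : Fin m}
    (h' : ∀ j ∈ T, σ' j = a) (h : ∀ j ∈ T, σ j = b) (c : Fin m) :
    ∑ j ∈ T, ((if σ' j = c then p j else 0) - if σ j = c then p j else 0) =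
      ((if a = c then 1 else 0) - if b = c then 1 else 0) * ∑ j ∈ T, p j := by
  rw [mul_sum]
  refine sum_congr rfl fun j hj => ?_
  rw [h' j hj, h j hj]
  split_ifs <;> ring

lemma IsImprovingKSwap.load_eq {k : ℕ} {σ σ' : Fin n → Fin m} {i i' : Fin m}
    {A B : Finset (Fin n)} (h : IsImprovingKSwap k p σ σ' i i' A B) (c : Fin m) :
    load p σ' c = load p σ c +
      ((if i' = c then 1 else 0) - if i = c then 1 else 0) * (∑ j ∈ A, p j - ∑ j ∈ B, p j) := by
  obtain ⟨-, -, hAB, hA, hB, -, -, -, -, hA', hB', hrest⟩ := h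
  have hdiff := load_sub_load_eq_sum_of_eq_outside p (S := A ∪ B)
    (fun j hj => hrest j (fun h => hj (mem_union_left _ h)) (fun h => hj (mem_union_right _ h))) c
  rw [sum_union hAB, sum_ite_sub_ite_of_const_on p hA' hA,
    sum_ite_sub_ite_of_const_on p hB' hB] at hdiff
  linear_combination hdiff

end Load

theorem potential_strict_decrease_general {n m k : ℕ}
    (p : Fin n → ℝ)
    (σ σ' : Fin n → Fin m)
    (h : ∃ (i i' : Fin m) (A B : Finset (Fin n)), IsImprovingKSwap k p σ σ' i i' A B) :
    potential p σ' < potential p σ := by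
  obtain ⟨i, i', A, B, hswap⟩ := h
  have hload := hswap.load_eq
  obtain ⟨-, hne, -, -, -, -, -, hpos, hlt, -⟩ := hswap
  refine sum_sum_abs_sub_lt_of_transfer hpos hlt ?_ ?_ fun c hci hci' => ?_
  · rw [hload, if_neg hne, if_pos rfl]; ring
  · rw [hload, if_pos rfl, if_neg hne.symm]; ring
  · rw [hload, if_neg (Ne.symm hci'), if_neg (Ne.symm hci)]; ring

/-- Every improving `k`-swap strictly decreases the potential `Φ`. -/
theorem potential_strict_decrease {n m k : ℕ} (hm : 2 ≤ m) (hk : 1 ≤ k)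
    (p : Fin n → ℝ) (hp : ∀ j, 0 < p j)
    (σ σ' : Fin n → Fin m)
    (h : ∃ (i i' : Fin m) (A B : Finset (Fin n)), IsImprovingKSwap k p σ σ' i i' A B) :
    potential p σ' < potential p σ :=
  potential_strict_decrease_general p σ σ' h
end

section
/- Consider an improving k-swap of type-2 from σ to σ'. Then Φ(σ) − Φ(σ') ≥ 4 · δ_min. -/
open Finset

/-! The swap moves `Δ = p(A) - p(B)` of load from the critical machine `i` to `i'`, which
leaves every pair of other machines untouched. For a third machine `h`, the two new loads
`L i - Δ`, `L i' + Δ` lie between the old ones and have the same sum, so by convexity of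
`x ↦ |x - L h|` the four terms involving `h` do not increase. The type-2 condition says
`L i' + Δ ≤ L i - δ_min`, which together with `δ_min ≤ Δ` makes `|L i - L i'|` drop by at
least `2 δ_min`; this pair is counted twice. -/

theorem abs_sub_add_abs_sub_le_of_transfer_s5 {x y c Δ : ℝ} (hΔ : 0 ≤ Δ) (hxy : Δ ≤ x - y) :
    |(x - Δ) - c| + |(y + Δ) - c| ≤ |x - c| + |y - c| := by
  rcases abs_cases ((x - Δ) - c) with ⟨h₁, _⟩ | ⟨h₁, _⟩ <;>
    rcases abs_cases ((y + Δ) - c) with ⟨h₂, _⟩ | ⟨h₂, _⟩ <;>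
    rcases abs_cases (x - c) with ⟨h₃, _⟩ | ⟨h₃, _⟩ <;>
    rcases abs_cases (y - c) with ⟨h₄, _⟩ | ⟨h₄, _⟩ <;> linarith

theorem abs_transfer_add_two_mul_le {x y Δ δ : ℝ} (hδ : 0 ≤ δ) (hδΔ : δ ≤ Δ)
    (hgap : Δ + δ ≤ x - y) :
    |(x - Δ) - (y + Δ)| + 2 * δ ≤ |x - y| := by
  rw [abs_of_nonneg (by linarith : 0 ≤ x - y)]
  rcases abs_cases ((x - Δ) - (y + Δ)) with ⟨h, _⟩ | ⟨h, _⟩ <;> linarith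

theorem four_mul_le_sum_abs_sub_sub_sum_abs_sub_of_transfer {ι : Type*} [Fintype ι]
    [DecidableEq ι] {L L' : ι → ℝ} {i i' : ι}
    {Δ δ : ℝ} (hne : i' ≠ i) (hi : L' i = L i - Δ) (hi' : L' i' = L i' + Δ)
    (hrest : ∀ h, h ≠ i → h ≠ i' → L' h = L h) (hδ : 0 ≤ δ) (hδΔ : δ ≤ Δ)
    (hgap : Δ + δ ≤ L i - L i') :
    4 * δ ≤ ∑ a, ∑ b, |L a - L b| - ∑ a, ∑ b, |L' a - L' b| := by
  set s : Finset ι := {i, i'}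
  set F : ι → ι → ℝ := fun a b => |L a - L b| - |L' a - L' b|
  have mem_compl : ∀ {h}, h ∈ sᶜ → h ≠ i ∧ h ≠ i' := by
    intro h hh
    simpa [s, not_or] using hh
  have split : ∀ g : ι → ℝ, ∑ a, g a = g i + g i' + ∑ a ∈ sᶜ, g a := fun g => by
    rw [← sum_add_sum_compl s, sum_pair hne.symm]
  have hF_diag : ∀ a, F a a = 0 := fun a => by simp [F]
  have hF_symm : ∀ a b, F a b = F b a := fun a b => by simp only [F, abs_sub_comm]
  have hF_outside : ∀ a ∈ sᶜ, ∀ b ∈ sᶜ, F a b = 0 := by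
    intro a ha b hb
    obtain ⟨ha, ha'⟩ := mem_compl ha
    obtain ⟨hb, hb'⟩ := mem_compl hb
    simp [F, hrest a ha ha', hrest b hb hb']
  have hF_pair : 2 * δ ≤ F i i' := by
    have := abs_transfer_add_two_mul_le hδ hδΔ hgap
    simp only [F, hi, hi']
    linarith
  have hF_third : ∀ h ∈ sᶜ, 0 ≤ F i h + F i' h := by
    intro h hh
    obtain ⟨hhi, hhi'⟩ := mem_compl hh
    have := abs_sub_add_abs_sub_le_of_transfer_s5 (x := L i) (y := L i') (c := L h)
      (hδ.trans hδΔ) (by linarith)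
    simp only [F, hi, hi', hrest h hhi hhi']
    linarith
  have hrows : ∀ a ∈ sᶜ, ∑ b, F a b = F i a + F i' a := fun a ha => by
    rw [split, sum_eq_zero (hF_outside a ha), hF_symm a i, hF_symm a i', add_zero]
  calc 4 * δ ≤ F i i' + F i' i + ∑ h ∈ sᶜ, (F i h + F i' h) + ∑ h ∈ sᶜ, (F i h + F i' h) := by
        linarith [hF_symm i i', sum_nonneg hF_third]
    _ = ∑ a, ∑ b, F a b := by
        rw [split, split (F i), split (F i'), sum_congr rfl hrows, hF_diag, hF_diag,
          sum_add_distrib]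
        ring
    _ = _ := by simp only [F, sum_sub_distrib]

theorem load_le_Lmax {n m : ℕ} (p : Fin n → ℝ) (σ : Fin n → Fin m) (h : Fin m) :
    load p σ h ≤ Lmax p σ :=
  le_ciSup (Set.finite_range _).bddAbove h

theorem deltaMin_nonneg (n k : ℕ) (p : Fin n → ℝ) : 0 ≤ deltaMin n k p :=
  Real.sInf_nonneg (by rintro x ⟨A, B, -, -, -, rfl⟩; exact abs_nonneg _)

theorem deltaMin_le_abs_sub {n k : ℕ} {p : Fin n → ℝ} {A B : Finset (Fin n)}
    (hAB : Disjoint A B) (hcard : 1 ≤ A.card + B.card) (hk : A.card + B.card ≤ k) :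
    deltaMin n k p ≤ |∑ j ∈ A, p j - ∑ j ∈ B, p j| :=
  csInf_le ⟨0, by rintro x ⟨A, B, -, -, -, rfl⟩; exact abs_nonneg _⟩ ⟨A, B, hAB, hcard, hk, rfl⟩

theorem load_sub_load_eq_sum_of_eqOn_compl {n m : ℕ} (p : Fin n → ℝ) {σ σ' : Fin n → Fin m}
    {S : Finset (Fin n)} (hS : ∀ j ∉ S, σ' j = σ j) (h : Fin m) :
    load p σ' h - load p σ h =
      ∑ j ∈ S, ((if σ' j = h then p j else 0) - if σ j = h then p j else 0) := by
  simp only [load, sum_filter, ← sum_sub_distrib]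
  refine (sum_subset (subset_univ S) fun j _ hj => ?_).symm
  simp [hS j hj]

namespace IsImprovingKSwap

variable {k n m : ℕ} {p : Fin n → ℝ} {σ σ' : Fin n → Fin m} {i i' : Fin m}
  {A B : Finset (Fin n)}

theorem load_eq_s5 (hswap : IsImprovingKSwap k p σ σ' i i' A B) (h : Fin m) :
    load p σ' h = load p σ h
      + (if h = i' then (∑ j ∈ A, p j) - ∑ j ∈ B, p j else 0)
      - (if h = i then (∑ j ∈ A, p j) - ∑ j ∈ B, p j else 0) := by
  obtain ⟨-, hne, hAB, hAi, hBi', -, -, -, -, hA'i', hB'i, hother⟩ := hswap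
  have hdiff := load_sub_load_eq_sum_of_eqOn_compl p (S := A ∪ B)
    (fun j hj => hother j (fun h => hj (mem_union_left B h)) fun h => hj (mem_union_right A h)) h
  rw [sum_union hAB, sum_congr (s₁ := A) rfl fun j hj => by rw [hA'i' j hj, hAi j hj],
    sum_congr (s₁ := B) rfl fun j hj => by rw [hB'i j hj, hBi' j hj]] at hdiff
  simp only [sum_sub_distrib, sum_ite_irrel, sum_const_zero] at hdiff
  split_ifs at hdiff ⊢ <;> subst_vars <;> first | contradiction | linarith

theorem Lmax_le (hswap : IsImprovingKSwap k p σ σ' i i' A B) : Lmax p σ' ≤ Lmax p σ := by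
  have : Nonempty (Fin m) := ⟨i⟩
  refine ciSup_le fun h => ?_
  rw [hswap.load_eq_s5]
  obtain ⟨hcrit, -, -, -, -, -, -, hpos, hlt, -⟩ := hswap
  have := load_le_Lmax p σ h
  split_ifs <;> subst_vars <;> linarith

end IsImprovingKSwap

theorem potential_decrease_type2_general {n m k : ℕ}
    (p : Fin n → ℝ)
    (σ σ' : Fin n → Fin m) (i i' : Fin m) (A B : Finset (Fin n))
    (hswap : IsImprovingKSwap k p σ σ' i i' A B)
    (htype2 : i' ∈ gammaS k p σ') :
    potential p σ - potential p σ' ≥ 4 * deltaMin n k p := by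
  have hload := hswap.load_eq_s5
  have hLmax := hswap.Lmax_le
  obtain ⟨hcrit, hne, hAB, -, -, hA, hk, hpos, -⟩ := hswap
  have hδΔ : deltaMin n k p ≤ (∑ j ∈ A, p j) - ∑ j ∈ B, p j :=
    (deltaMin_le_abs_sub hAB (by omega) hk).trans_eq (abs_of_pos hpos)
  have hgap : load p σ' i' ≤ load p σ i - deltaMin n k p :=
    (mem_filter.1 htype2).2.trans (by linarith)
  simp only [hload, hne, if_true, if_false] at hgap
  exact four_mul_le_sum_abs_sub_sub_sum_abs_sub_of_transfer hne (by simp [hload, hne.symm])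
    (by simp [hload, hne]) (fun h hi hi' => by simp [hload, hi, hi']) (deltaMin_nonneg n k p)
    hδΔ (by linarith)

/-- An improving `k`-swap of type-2 (i.e. `i' ∈ γ_s(σ')`) decreases the potential `Φ`
by at least `4 δ_min`. -/
theorem potential_decrease_type2 {n m k : ℕ} (hm : 2 ≤ m) (hk : 1 ≤ k)
    (p : Fin n → ℝ) (hp : ∀ j, 0 < p j) (hδ : 0 < deltaMin n k p)
    (σ σ' : Fin n → Fin m) (i i' : Fin m) (A B : Finset (Fin n))
    (hswap : IsImprovingKSwap k p σ σ' i i' A B)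
    (htype2 : i' ∈ gammaS k p σ') :
    potential p σ - potential p σ' ≥ 4 * deltaMin n k p :=
  potential_decrease_type2_general p σ σ' i i' A B hswap htype2
end

section
/- Let X_1, …, X_n be independent real-valued random variables such that for each j the law of X_j has a density f_j with respect to Lebesgue measure satisfying f_j ≤ φ almost everywhere, where φ ≥ 1. Let A and B be disjoint finite subsets of {1, …, n} with A ∪ B nonempty, and let α ≥ 0. Then P(|∑_{j ∈ A} X_j − ∑_{j ∈ B} X_j| ≤ α) ≤ 2 · α · φ. -/
/-!
Pick an index `i ∈ A ∪ B`; swapping `A` and `B` if necessary, `i ∈ A`. Then the difference of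
the two sums is `X i + R`, where `R` is a signed sum of the other variables and hence is
independent of `X i`. Conditionally on `R = t`, the event is `X i ∈ [-t - α, -t + α]`, an
interval of length `2α`, whose probability is at most `2αφ` because the density of `X i` is
bounded by `φ`. Integrating over the law of `R` gives the bound.
-/

open MeasureTheory ProbabilityTheory Finset

lemma MeasureTheory.withDensity_le_smul_of_ae_le {α : Type*} [MeasurableSpace α]
    {μ : Measure α} {f : α → ENNReal} {c : ENNReal} (hf : ∀ᵐ x ∂μ, f x ≤ c) :
    μ.withDensity f ≤ c • μ := by
  rw [← withDensity_const]
  exact withDensity_mono hf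

lemma measure_abs_add_le_of_map_eq_withDensity {Ω : Type*} [MeasurableSpace Ω]
    {μ : Measure Ω} {Z : Ω → ℝ} (hZ : Measurable Z) {g : ℝ → ℝ} {φ : ℝ}
    (hlaw : μ.map Z = volume.withDensity (fun x => ENNReal.ofReal (g x)))
    (hg : ∀ᵐ x ∂(volume : Measure ℝ), g x ≤ φ) {α : ℝ} (hα : 0 ≤ α) (t : ℝ) :
    μ {ω | |Z ω + t| ≤ α} ≤ ENNReal.ofReal (2 * α * φ) := by
  have hset : {ω | |Z ω + t| ≤ α} = Z ⁻¹' Set.Icc (-t - α) (-t + α) := by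
    ext ω
    simp only [Set.mem_ofPred_eq, Set.mem_preimage, Set.mem_Icc, abs_le]
    constructor <;> rintro ⟨h₁, h₂⟩ <;> constructor <;> linarith
  have hdens : μ.map Z ≤ ENNReal.ofReal φ • volume := by
    rw [hlaw]
    refine withDensity_le_smul_of_ae_le ?_
    filter_upwards [hg] with x hx using ENNReal.ofReal_le_ofReal hx
  calc μ {ω | |Z ω + t| ≤ α}
      = μ.map Z (Set.Icc (-t - α) (-t + α)) := by
        rw [hset, Measure.map_apply hZ measurableSet_Icc]
    _ ≤ ENNReal.ofReal φ * volume (Set.Icc (-t - α) (-t + α)) := hdens _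
    _ = ENNReal.ofReal (2 * α * φ) := by
        rw [Real.volume_Icc, ← ENNReal.ofReal_mul' (by linarith)]
        ring_nf

lemma measure_preimage_prodMk_le_of_indepFun {Ω β γ : Type*} [MeasurableSpace Ω]
    [MeasurableSpace β] [MeasurableSpace γ] {μ : Measure Ω} [IsProbabilityMeasure μ]
    {Z : Ω → β} {R : Ω → γ} (hZ : Measurable Z) (hR : Measurable R) (hZR : IndepFun Z R μ)
    {E : Set (β × γ)} (hE : MeasurableSet E) {C : ENNReal}
    (hslice : ∀ t, μ (Z ⁻¹' ((·, t) ⁻¹' E)) ≤ C) :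
    μ ((fun ω => (Z ω, R ω)) ⁻¹' E) ≤ C := by
  have : IsProbabilityMeasure (μ.map R) := Measure.isProbabilityMeasure_map hR.aemeasurable
  calc μ ((fun ω => (Z ω, R ω)) ⁻¹' E)
      = ((μ.map Z).prod (μ.map R)) E := by
        rw [← (indepFun_iff_map_prod_eq_prod_map_map hZ.aemeasurable hR.aemeasurable).1 hZR,
          Measure.map_apply (hZ.prodMk hR) hE]
    _ = ∫⁻ t, μ.map Z ((·, t) ⁻¹' E) ∂(μ.map R) := Measure.prod_apply_symm hE
    _ ≤ C := lintegral_le_const <| .of_forall fun t => by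
        rw [Measure.map_apply hZ (measurable_prodMk_right hE)]
        exact hslice t

lemma ProbabilityTheory.iIndepFun.indepFun_sum_sub_sum {Ω ι : Type*} [MeasurableSpace Ω]
    {μ : Measure Ω} {X : ι → Ω → ℝ} (hX : iIndepFun X μ) (hmeas : ∀ j, Measurable (X j))
    {s t : Finset ι} (hst : Disjoint s t) {i : ι} (his : i ∉ s) (hit : i ∉ t) :
    IndepFun (X i) (fun ω => ∑ j ∈ s, X j ω - ∑ j ∈ t, X j ω) μ := by
  classical
  let sign : ι → ℝ → ℝ := fun j x => if j ∈ t then -x else x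
  have hsign : ∀ j, Measurable (sign j) := fun j => by
    by_cases hj : j ∈ t <;> simp only [sign, hj, if_true, if_false]
    exacts [measurable_neg, measurable_id]
  have hY := (hX.comp sign hsign).indepFun_finsetSum_of_notMem
    (fun j => (hsign j).comp (hmeas j)) (notMem_union.2 ⟨his, hit⟩)
  convert hY.symm using 1
  · funext ω
    simp [sign, hit]
  · funext ω
    rw [Finset.sum_apply, sum_union hst, sub_eq_add_neg, ← sum_neg_distrib]
    congr 1 <;> refine sum_congr rfl fun j hj => ?_
    · simp [sign, disjoint_left.1 hst hj]
    · simp [sign, hj]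

theorem prob_abs_diff_sum_le_general {Ω : Type*} [MeasureSpace Ω]
    [IsProbabilityMeasure (ℙ : Measure Ω)]
    (n : ℕ) (X : Fin n → Ω → ℝ) (hmeas : ∀ j, Measurable (X j))
    (hindep : iIndepFun (m := fun _ => Real.measurableSpace) X ℙ)
    (φ : ℝ) (f : Fin n → ℝ → ℝ)
    (hlaw : ∀ j, Measure.map (X j) ℙ =
      volume.withDensity (fun x => ENNReal.ofReal (f j x)))
    (hbound : ∀ j, ∀ᵐ x ∂(volume : Measure ℝ), f j x ≤ φ)
    (A B : Finset (Fin n)) (hAB : Disjoint A B) (hne : (A ∪ B).Nonempty)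
    (α : ℝ) (hα : 0 ≤ α) :
    ℙ {ω | |(∑ j ∈ A, X j ω) - ∑ j ∈ B, X j ω| ≤ α} ≤ ENNReal.ofReal (2 * α * φ) := by
  obtain ⟨i, hi⟩ := hne
  wlog hiA : i ∈ A generalizing A B with H
  · simpa only [abs_sub_comm] using
      H B A hAB.symm (union_comm A B ▸ hi) ((mem_union.1 hi).resolve_left hiA)
  have hsplit : ∀ ω, ∑ j ∈ A, X j ω - ∑ j ∈ B, X j ω
      = X i ω + (∑ j ∈ A.erase i, X j ω - ∑ j ∈ B, X j ω) := fun ω => by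
    rw [← add_sum_erase A _ hiA]
    ring
  simp_rw [hsplit]
  exact measure_preimage_prodMk_le_of_indepFun (E := {p : ℝ × ℝ | |p.1 + p.2| ≤ α})
    (hmeas i) (by fun_prop)
    (hindep.indepFun_sum_sub_sum hmeas (disjoint_of_subset_left (erase_subset i A) hAB)
      (notMem_erase i A) (disjoint_left.1 hAB hiA))
    (isClosed_le (by fun_prop) continuous_const).measurableSet
    (measure_abs_add_le_of_map_eq_withDensity (hmeas i) (hlaw i) (hbound i) hα)

/-- If `X 1, …, X n` are independent real random variables whose laws have densities
bounded by `φ ≥ 1` with respect to Lebesgue measure, and `A`, `B` are disjoint finsets of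
indices, not both empty, then for `α ≥ 0`,
`P(|∑_{j ∈ A} X j - ∑_{j ∈ B} X j| ≤ α) ≤ 2 · α · φ`. -/
theorem prob_abs_diff_sum_le {Ω : Type*} [MeasureSpace Ω]
    [IsProbabilityMeasure (ℙ : Measure Ω)]
    (n : ℕ) (X : Fin n → Ω → ℝ) (hmeas : ∀ j, Measurable (X j))
    (hindep : iIndepFun (m := fun _ => Real.measurableSpace) X ℙ)
    (φ : ℝ) (hφ : 1 ≤ φ) (f : Fin n → ℝ → ℝ)
    (hlaw : ∀ j, Measure.map (X j) ℙ =
      volume.withDensity (fun x => ENNReal.ofReal (f j x)))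
    (hbound : ∀ j, ∀ᵐ x ∂(volume : Measure ℝ), f j x ≤ φ)
    (A B : Finset (Fin n)) (hAB : Disjoint A B) (hne : (A ∪ B).Nonempty)
    (α : ℝ) (hα : 0 ≤ α) :
    ℙ {ω | |(∑ j ∈ A, X j ω) - ∑ j ∈ B, X j ω| ≤ α} ≤ ENNReal.ofReal (2 * α * φ) :=
  prob_abs_diff_sum_le_general n X hmeas hindep φ f hlaw hbound A B hAB hne α hα
end

section
/- Let X_1, …, X_n be independent real-valued random variables such that for each j the law of X_j has a density f_j with respect to Lebesgue measure satisfying f_j ≤ φ almost everywhere, where φ ≥ 1. Fix an integer k ≥ 1 and define δ_min = min{ |∑_{j ∈ A} X_j − ∑_{j ∈ B} X_j| : A, B disjoint subsets of {1, …, n} with 1 ≤ |A| + |B| ≤ k }. Then for every α ∈ (0, k], P(δ_min ≤ α) ≤ 2^{k+1} · n^k · α · φ. -/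
open MeasureTheory ProbabilityTheory

/-- `δ_min`: the minimum over ordered pairs `(A, B)` of disjoint subsets of indices with
`1 ≤ |A| + |B| ≤ k` of `|∑_{j ∈ A} x j - ∑_{j ∈ B} x j|`. -/
noncomputable def deltaMinOf (n k : ℕ) (x : Fin n → ℝ) : ℝ :=
  sInf { y | ∃ A B : Finset (Fin n), Disjoint A B ∧ 1 ≤ A.card + B.card ∧
    A.card + B.card ≤ k ∧ y = |(∑ j ∈ A, x j) - ∑ j ∈ B, x j| }

lemma two_mul_choose_le_aux (n : ℕ) : ∀ m, 2 ≤ m → 2 * Nat.choose n m ≤ n ^ m := by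
  intro m hm
  induction m with
  | zero => omega
  | succ m ih =>
    rcases Nat.lt_or_ge m 2 with h | h
    · have hm1 : m = 1 := by omega
      subst hm1
      have he : Even (n * (n - 1)) := by
        rcases n with _ | n
        · simp
        · simpa [Nat.mul_comm] using Nat.even_mul_succ_self n
      have h2 : 2 * Nat.choose n 2 = n * (n - 1) := by
        rw [Nat.choose_two_right, Nat.mul_div_cancel' he.two_dvd]
      rw [h2]
      calc n * (n - 1) ≤ n * n := Nat.mul_le_mul_left _ (Nat.sub_le n 1)
        _ = n ^ 2 := (sq n).symm
    · have h1 := ih h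
      have h2 : Nat.choose n (m + 1) ≤ Nat.choose n m * n := by
        calc Nat.choose n (m + 1) ≤ Nat.choose n (m + 1) * (m + 1) :=
              Nat.le_mul_of_pos_right _ (by omega)
          _ = Nat.choose n m * (n - m) := Nat.choose_succ_right_eq n m
          _ ≤ Nat.choose n m * n := Nat.mul_le_mul_left _ (Nat.sub_le n m)
      calc 2 * Nat.choose n (m + 1) ≤ 2 * (Nat.choose n m * n) :=
            Nat.mul_le_mul_left _ h2
        _ = 2 * Nat.choose n m * n := by ring
        _ ≤ n ^ m * n := Nat.mul_le_mul_right _ h1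
        _ = n ^ (m + 1) := (pow_succ n m).symm

lemma sum_choose_two_pow_le_aux (n : ℕ) (hn : 1 ≤ n) :
    ∀ k, 1 ≤ k → ∑ m ∈ Finset.Icc 1 k, Nat.choose n m * 2 ^ m ≤ 2 ^ k * n ^ k := by
  intro k hk
  induction k with
  | zero => omega
  | succ k ih =>
    rcases Nat.eq_or_lt_of_le hk with h | h
    · simp [← h, Nat.choose_one_right, Nat.mul_comm]
    · have hk1 : 1 ≤ k := by omega
      have h1 := ih hk1
      rw [Finset.sum_Icc_succ_top (by omega : 1 ≤ k + 1)]
      have h2 : Nat.choose n (k + 1) * 2 ^ (k + 1) ≤ 2 ^ k * n ^ (k + 1) := by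
        have := two_mul_choose_le_aux n (k + 1) (by omega)
        calc Nat.choose n (k + 1) * 2 ^ (k + 1) = 2 * Nat.choose n (k + 1) * 2 ^ k := by ring
          _ ≤ n ^ (k + 1) * 2 ^ k := Nat.mul_le_mul_right _ this
          _ = 2 ^ k * n ^ (k + 1) := Nat.mul_comm _ _
      have h3 : 2 ^ k * n ^ k ≤ 2 ^ k * n ^ (k + 1) :=
        Nat.mul_le_mul_left _ (Nat.pow_le_pow_right hn (by omega))
      calc ∑ m ∈ Finset.Icc 1 k, Nat.choose n m * 2 ^ m + Nat.choose n (k + 1) * 2 ^ (k + 1)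
          ≤ 2 ^ k * n ^ (k + 1) + 2 ^ k * n ^ (k + 1) := Nat.add_le_add (le_trans h1 h3) h2
        _ = 2 ^ (k + 1) * n ^ (k + 1) := by ring

lemma card_pairs_le_aux (n k : ℕ) :
    ((Finset.univ : Finset (Finset (Fin n) × Finset (Fin n))).filter
      (fun p => Disjoint p.1 p.2 ∧ 1 ≤ p.1.card + p.2.card ∧ p.1.card + p.2.card ≤ k)).card
      ≤ ∑ m ∈ Finset.Icc 1 k, Nat.choose n m * 2 ^ m := by
  classical
  set T : Finset (Σ _ : ℕ, Σ _ : Finset (Fin n), Finset (Fin n)) :=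
    (Finset.Icc 1 k).sigma (fun m =>
      ((Finset.univ : Finset (Fin n)).powersetCard m).sigma (fun U => U.powerset)) with hT
  have hcard : T.card = ∑ m ∈ Finset.Icc 1 k, Nat.choose n m * 2 ^ m := by
    rw [hT, Finset.card_sigma]
    refine Finset.sum_congr rfl fun m hm => ?_
    rw [Finset.card_sigma]
    rw [Finset.sum_congr rfl (fun U hU => ?_), Finset.sum_const, Finset.card_powersetCard,
      Finset.card_univ, Fintype.card_fin, smul_eq_mul]
    rw [Finset.card_powerset, (Finset.mem_powersetCard.mp hU).2]
  rw [← hcard]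
  apply Finset.card_le_card_of_injOn
    (fun p => ⟨p.1.card + p.2.card, ⟨p.1 ∪ p.2, p.1⟩⟩)
  · intro p hp
    simp only [Finset.mem_coe, Finset.mem_filter] at hp
    obtain ⟨-, hd, h1, h2⟩ := hp
    simp only [hT, Finset.mem_coe, Finset.mem_sigma, Finset.mem_Icc, Finset.mem_powersetCard,
      Finset.mem_powerset]
    exact ⟨⟨h1, h2⟩, ⟨Finset.subset_univ _, by rw [Finset.card_union_of_disjoint hd]⟩,
      Finset.subset_union_left⟩
  · intro p hp q hq he
    simp only [Finset.mem_coe, Finset.mem_filter] at hp hq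
    have h1 : p.1 = q.1 := by
      have := congrArg (fun s => s.2.2) he
      simpa using this
    have hU : p.1 ∪ p.2 = q.1 ∪ q.2 := by
      have := congrArg (fun s => s.2.1) he
      simpa using this
    have h2 : p.2 = q.2 := by
      have hp2 : p.2 = (p.1 ∪ p.2) \ p.1 := (Finset.union_sdiff_cancel_left hp.2.1).symm
      have hq2 : q.2 = (q.1 ∪ q.2) \ q.1 := (Finset.union_sdiff_cancel_left hq.2.1).symm
      rw [hp2, hq2, hU, h1]
    exact Prod.ext h1 h2

lemma law_scaled_Icc_aux {Ω : Type*} [MeasureSpace Ω] (X : Ω → ℝ) (hX : Measurable X)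
    (f : ℝ → ℝ) (φ : ℝ)
    (hlaw : Measure.map X ℙ = volume.withDensity (fun x => ENNReal.ofReal (f x)))
    (hb : ∀ᵐ x ∂(volume : Measure ℝ), f x ≤ φ) (c : ℝ) (hc : c = 1 ∨ c = -1) (a b : ℝ) :
    Measure.map (fun ω => c * X ω) ℙ (Set.Icc a b) ≤
      ENNReal.ofReal φ * ENNReal.ofReal (b - a) := by
  have key : ∀ s : Set ℝ, MeasurableSet s →
      Measure.map X ℙ s ≤ ENNReal.ofReal φ * volume s := by
    intro s hs
    rw [hlaw, withDensity_apply _ hs]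
    calc ∫⁻ x in s, ENNReal.ofReal (f x) ∂volume
        ≤ ∫⁻ _ in s, ENNReal.ofReal φ ∂volume := by
          refine lintegral_mono_ae ?_
          filter_upwards [ae_restrict_of_ae hb] with x hx
          exact ENNReal.ofReal_le_ofReal hx
      _ = ENNReal.ofReal φ * volume s := by rw [setLIntegral_const]
  rcases hc with rfl | rfl
  · simp only [one_mul]
    calc Measure.map X ℙ (Set.Icc a b) ≤ ENNReal.ofReal φ * volume (Set.Icc a b) :=
          key _ measurableSet_Icc
      _ = ENNReal.ofReal φ * ENNReal.ofReal (b - a) := by rw [Real.volume_Icc]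
  · have hpre : (fun ω => (-1 : ℝ) * X ω) ⁻¹' Set.Icc a b = X ⁻¹' Set.Icc (-b) (-a) := by
      ext ω
      simp only [Set.mem_preimage, Set.mem_Icc, neg_one_mul]
      constructor <;> intro h <;> constructor <;> linarith [h.1, h.2]
    rw [Measure.map_apply (hX.const_mul _) measurableSet_Icc, hpre,
      ← Measure.map_apply hX measurableSet_Icc]
    calc Measure.map X ℙ (Set.Icc (-b) (-a))
        ≤ ENNReal.ofReal φ * volume (Set.Icc (-b) (-a)) := key _ measurableSet_Icc
      _ = ENNReal.ofReal φ * ENNReal.ofReal (b - a) := by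
          rw [Real.volume_Icc]; ring_nf

lemma pair_bound_aux {Ω : Type*} [MeasureSpace Ω] [IsProbabilityMeasure (ℙ : Measure Ω)]
    (T Y : Ω → ℝ) (hT : Measurable T) (hY : Measurable Y)
    (hind : IndepFun T Y ℙ) (φ α : ℝ) (hφ : 0 ≤ φ)
    (hlawY : ∀ a b : ℝ, Measure.map Y ℙ (Set.Icc a b) ≤
      ENNReal.ofReal φ * ENNReal.ofReal (b - a)) :
    ℙ {ω | |T ω + Y ω| ≤ α} ≤ ENNReal.ofReal (2 * α * φ) := by
  have hmap := (indepFun_iff_map_prod_eq_prod_map_map hT.aemeasurable hY.aemeasurable).mp hind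
  set s : Set (ℝ × ℝ) := {p : ℝ × ℝ | |p.1 + p.2| ≤ α} with hs
  have hsm : MeasurableSet s := by
    have : s = (fun p : ℝ × ℝ => p.1 + p.2) ⁻¹' Set.Icc (-α) α := by
      ext p; simp [hs, abs_le]
    rw [this]
    exact (measurable_fst.add measurable_snd) measurableSet_Icc
  have hev : {ω | |T ω + Y ω| ≤ α} = (fun ω => (T ω, Y ω)) ⁻¹' s := rfl
  rw [hev, ← Measure.map_apply (hT.prodMk hY) hsm, hmap,
    Measure.prod_apply hsm]
  have hslice : ∀ t : ℝ, Prod.mk t ⁻¹' s = Set.Icc (-t - α) (-t + α) := by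
    intro t
    ext y
    simp only [Set.mem_preimage, hs, Set.mem_setOf_eq, Set.mem_Icc, abs_le]
    constructor <;> intro h <;> constructor <;> linarith [h.1, h.2]
  have hprob : IsProbabilityMeasure (Measure.map T ℙ) := Measure.isProbabilityMeasure_map hT.aemeasurable
  calc ∫⁻ t, Measure.map Y ℙ (Prod.mk t ⁻¹' s) ∂(Measure.map T ℙ)
      ≤ ∫⁻ _, ENNReal.ofReal φ * ENNReal.ofReal (2 * α) ∂(Measure.map T ℙ) := by
        refine lintegral_mono fun t => ?_
        rw [hslice t]
        calc Measure.map Y ℙ (Set.Icc (-t - α) (-t + α))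
            ≤ ENNReal.ofReal φ * ENNReal.ofReal ((-t + α) - (-t - α)) := hlawY _ _
          _ = ENNReal.ofReal φ * ENNReal.ofReal (2 * α) := by ring_nf
    _ = ENNReal.ofReal φ * ENNReal.ofReal (2 * α) := by
        rw [lintegral_const, measure_univ, mul_one]
    _ ≤ ENNReal.ofReal (2 * α * φ) := by
        rw [← ENNReal.ofReal_mul hφ]
        exact ENNReal.ofReal_le_ofReal (le_of_eq (by ring))

/-- If `X 1, …, X n` are independent real random variables whose laws have densities
bounded by `φ ≥ 1` with respect to Lebesgue measure, and `k ≥ 1`, then for every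
`α ∈ (0, k]`, `P(δ_min ≤ α) ≤ 2^(k+1) · n^k · α · φ`. -/
theorem prob_deltaMin_le {Ω : Type*} [MeasureSpace Ω]
    [IsProbabilityMeasure (ℙ : Measure Ω)]
    (n : ℕ) (hn : 1 ≤ n) (X : Fin n → Ω → ℝ) (hmeas : ∀ j, Measurable (X j))
    (hindep : iIndepFun X ℙ)
    (φ : ℝ) (hφ : 1 ≤ φ) (f : Fin n → ℝ → ℝ)
    (hlaw : ∀ j, Measure.map (X j) ℙ =
      volume.withDensity (fun x => ENNReal.ofReal (f j x)))
    (hbound : ∀ j, ∀ᵐ x ∂(volume : Measure ℝ), f j x ≤ φ)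
    (k : ℕ) (hk : 1 ≤ k) (α : ℝ) (hα0 : 0 < α) (hαk : α ≤ (k : ℝ)) :
    ℙ {ω | deltaMinOf n k (fun j => X j ω) ≤ α} ≤
      ENNReal.ofReal (2 ^ (k + 1) * (n : ℝ) ^ k * α * φ) := by
  classical
  set P : Finset (Finset (Fin n) × Finset (Fin n)) :=
    Finset.univ.filter (fun p => Disjoint p.1 p.2 ∧ 1 ≤ p.1.card + p.2.card ∧
      p.1.card + p.2.card ≤ k) with hP
  have hp0 : (({(⟨0, hn⟩ : Fin n)} : Finset (Fin n)), (∅ : Finset (Fin n))) ∈ P := by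
    simp [hP, hk]
  -- Step 1: inclusion into finite union
  have hsub : {ω | deltaMinOf n k (fun j => X j ω) ≤ α} ⊆
      ⋃ p ∈ P, {ω | |(∑ j ∈ p.1, X j ω) - ∑ j ∈ p.2, X j ω| ≤ α} := by
    intro ω hω
    simp only [Set.mem_setOf_eq] at hω
    have hset : {y | ∃ A B : Finset (Fin n), Disjoint A B ∧ 1 ≤ A.card + B.card ∧
        A.card + B.card ≤ k ∧ y = |(∑ j ∈ A, X j ω) - ∑ j ∈ B, X j ω|}
        = ↑(P.image (fun p => |(∑ j ∈ p.1, X j ω) - ∑ j ∈ p.2, X j ω|)) := by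
      ext y
      simp only [Set.mem_setOf_eq, Finset.coe_image, Set.mem_image, Finset.mem_coe, hP,
        Finset.mem_filter, Finset.mem_univ, true_and]
      constructor
      · rintro ⟨A, B, hd, h1, h2, rfl⟩
        exact ⟨(A, B), ⟨hd, h1, h2⟩, rfl⟩
      · rintro ⟨p, ⟨hd, h1, h2⟩, rfl⟩
        exact ⟨p.1, p.2, hd, h1, h2, rfl⟩
    rw [deltaMinOf, hset] at hω
    have hne : (P.image (fun p => |(∑ j ∈ p.1, X j ω) - ∑ j ∈ p.2, X j ω|)).Nonempty :=
      ⟨_, Finset.mem_image_of_mem _ hp0⟩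
    have hmem := hne.csInf_mem
    rw [Finset.mem_image] at hmem
    obtain ⟨p, hpP, hpe⟩ := hmem
    refine Set.mem_biUnion hpP ?_
    simp only [Set.mem_setOf_eq]
    rw [hpe]
    exact hω
  -- Step 2: per-pair bound
  have hpair : ∀ p ∈ P, ℙ {ω | |(∑ j ∈ p.1, X j ω) - ∑ j ∈ p.2, X j ω| ≤ α}
      ≤ ENNReal.ofReal (2 * α * φ) := by
    intro p hp
    rw [hP, Finset.mem_filter] at hp
    obtain ⟨-, hd, h1, -⟩ := hp
    set e : Fin n → ℝ := fun i => if i ∈ p.2 then (-1 : ℝ) else 1 with he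
    set Y : Fin n → Ω → ℝ := fun i ω => e i * X i ω with hY
    have hYmeas : ∀ i, Measurable (Y i) := fun i => (hmeas i).const_mul (e i)
    have hYindep : iIndepFun Y ℙ :=
      hindep.comp (fun i x => e i * x) (fun i => measurable_const_mul _)
    have hUne : (p.1 ∪ p.2).Nonempty := by
      rw [← Finset.card_pos, Finset.card_union_of_disjoint hd]; omega
    obtain ⟨j0, hj0⟩ := hUne
    set T : Ω → ℝ := fun ω => ∑ j ∈ (p.1 ∪ p.2).erase j0, Y j ω with hT
    have hTmeas : Measurable T := Finset.measurable_sum _ (fun i _ => hYmeas i)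
    have hind : IndepFun T (Y j0) ℙ := by
      have h := hYindep.indepFun_finsetSum_of_notMem hYmeas
        (Finset.notMem_erase j0 (p.1 ∪ p.2))
      have heq : (∑ j ∈ (p.1 ∪ p.2).erase j0, Y j) = T := by
        funext ω; simp [hT, Finset.sum_apply]
      rwa [heq] at h
    have hsum : ∀ ω, (∑ j ∈ p.1, X j ω) - ∑ j ∈ p.2, X j ω = T ω + Y j0 ω := by
      intro ω
      have h2 : ∑ j ∈ p.1 ∪ p.2, Y j ω = T ω + Y j0 ω := by
        rw [hT]; exact (Finset.sum_erase_add _ _ hj0).symm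
      rw [← h2, Finset.sum_union hd]
      have hA : ∑ j ∈ p.1, Y j ω = ∑ j ∈ p.1, X j ω :=
        Finset.sum_congr rfl fun i hi => by
          simp [hY, he, Finset.disjoint_left.mp hd hi]
      have hB : ∑ j ∈ p.2, Y j ω = -∑ j ∈ p.2, X j ω := by
        rw [← Finset.sum_neg_distrib]
        refine Finset.sum_congr rfl fun i hi => ?_
        simp [hY, he, hi]
      rw [hA, hB]
      ring
    have hev : {ω | |(∑ j ∈ p.1, X j ω) - ∑ j ∈ p.2, X j ω| ≤ α}
        = {ω | |T ω + Y j0 ω| ≤ α} := by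
      ext ω; rw [Set.mem_setOf_eq, Set.mem_setOf_eq, hsum ω]
    rw [hev]
    refine pair_bound_aux T (Y j0) hTmeas (hYmeas j0) hind φ α (by linarith) ?_
    intro a b
    exact law_scaled_Icc_aux (X j0) (hmeas j0) (f j0) φ (hlaw j0) (hbound j0) (e j0)
      (by rw [he]; dsimp only; split_ifs; exacts [Or.inr rfl, Or.inl rfl]) a b
  -- Step 3: counting and conclusion
  have hcard : P.card ≤ 2 ^ k * n ^ k :=
    le_trans (card_pairs_le_aux n k) (sum_choose_two_pow_le_aux n hn k hk)
  calc ℙ {ω | deltaMinOf n k (fun j => X j ω) ≤ α}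
      ≤ ℙ (⋃ p ∈ P, {ω | |(∑ j ∈ p.1, X j ω) - ∑ j ∈ p.2, X j ω| ≤ α}) :=
        measure_mono hsub
    _ ≤ ∑ p ∈ P, ℙ {ω | |(∑ j ∈ p.1, X j ω) - ∑ j ∈ p.2, X j ω| ≤ α} :=
        measure_biUnion_finset_le P _
    _ ≤ ∑ _p ∈ P, ENNReal.ofReal (2 * α * φ) := Finset.sum_le_sum hpair
    _ = P.card * ENNReal.ofReal (2 * α * φ) := by
        rw [Finset.sum_const, nsmul_eq_mul]
    _ ≤ ((2 ^ k * n ^ k : ℕ) : ENNReal) * ENNReal.ofReal (2 * α * φ) := by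
        exact mul_le_mul_left (by exact_mod_cast hcard) _
    _ = ENNReal.ofReal (2 ^ (k + 1) * (n : ℝ) ^ k * α * φ) := by
        rw [← ENNReal.ofReal_natCast, ← ENNReal.ofReal_mul (by positivity)]
        congr 1
        push_cast
        ring
end
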